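/- arXiv:2106.03803 — 2 statements merged into one kernel-verified Lean document; each statement's English description precedes it below -/
import Mathlib

section
/- Let (A, H_B, H_dR, ∫) be as in the context. Then eval_∫ : P(A) → ℂ is injective (i.e. the period conjecture holds) if and only if the following implication holds: whenever M ∈ A, σ ∈ H_B(M) and ω ∈ H_dR(M)^∨ satisfy ω(∫_M(σ)) = 0, there exists an exact sequence 0 → N' → M → N → 0 in A such that σ lies in the image of H_B(N') in H_B(M) and ω lies in the image of H_dR(N)^∨ in H_dR(M)^∨. -/
set_option maxHeartbeats 1000000
set_option synthInstance.maxHeartbeats 400000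

open CategoryTheory CategoryTheory.Limits Module TensorProduct

universe v u

/-- A fiber functor on a `ℚ`-linear Abelian category, defined over a field `F ⊇ ℚ`:
a `ℚ`-linear, exact, faithful functor into finite-dimensional `F`-vector spaces. -/
structure FiberFunctor (A : Type u) [Category.{v} A] [Abelian A] [CategoryTheory.Linear ℚ A]
    (F : Type) [Field F] [Algebra ℚ F] where
  H : A ⥤ ModuleCat.{0} F
  additive : H.Additive
  linear : ∀ (q : ℚ) {M N : A} (f : M ⟶ N), H.map (q • f) = (algebraMap ℚ F q) • H.map f
  exact_left : Limits.PreservesFiniteLimits H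
  exact_right : Limits.PreservesFiniteColimits H
  faithful : H.Faithful
  finDim : ∀ M : A, FiniteDimensional F (H.obj M)

variable (A : Type u) [Category.{v} A] [Abelian A] [CategoryTheory.Linear ℚ A]
variable (K : Subfield ℂ)
variable (HB : FiberFunctor A ℚ) (HdR : FiberFunctor A ↥K)

/-- The index type of the free module on symbols `(M, σ, ω)`. -/
abbrev PIdx := Σ M : A, (HB.H.obj M) × Module.Dual ↥K (HdR.H.obj M)

/-- The free `K`-module on symbols `(M, σ, ω)`. -/
abbrev FreeMod := PIdx A K HB HdR →₀ ↥K

/-- Generators of the relations defining `P(A)` as a quotient of the free `K`-module on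
symbols `(σ ⊗ ω)_M`: bilinearity relations (making the quotient by them the direct sum
`⊕_M H_B(M) ⊗_ℚ H_dR(M)^∨`) together with the period relations
`(σ ⊗ α^∨(ω))_M = (α(σ) ⊗ ω)_N` for morphisms `α : M ⟶ N`. -/
def RelGen (x : FreeMod A K HB HdR) : Prop :=
  (∃ (M : A) (σ σ' : HB.H.obj M) (ω : Module.Dual ↥K (HdR.H.obj M)),
      x = Finsupp.single ⟨M, (σ + σ', ω)⟩ 1 - Finsupp.single ⟨M, (σ, ω)⟩ 1
            - Finsupp.single ⟨M, (σ', ω)⟩ 1) ∨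
  (∃ (M : A) (σ : HB.H.obj M) (ω ω' : Module.Dual ↥K (HdR.H.obj M)),
      x = Finsupp.single ⟨M, (σ, ω + ω')⟩ 1 - Finsupp.single ⟨M, (σ, ω)⟩ 1
            - Finsupp.single ⟨M, (σ, ω')⟩ 1) ∨
  (∃ (M : A) (q : ℚ) (σ : HB.H.obj M) (ω : Module.Dual ↥K (HdR.H.obj M)),
      x = Finsupp.single ⟨M, (q • σ, ω)⟩ 1 - Finsupp.single ⟨M, (σ, ω)⟩ (algebraMap ℚ ↥K q)) ∨
  (∃ (M : A) (c : ↥K) (σ : HB.H.obj M) (ω : Module.Dual ↥K (HdR.H.obj M)),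
      x = Finsupp.single ⟨M, (σ, c • ω)⟩ 1 - Finsupp.single ⟨M, (σ, ω)⟩ c) ∨
  (∃ (M N : A) (α : M ⟶ N) (σ : HB.H.obj M) (ω : Module.Dual ↥K (HdR.H.obj N)),
      x = Finsupp.single ⟨M, (σ, ω.comp (HdR.H.map α).hom)⟩ 1
            - Finsupp.single ⟨N, (HB.H.map α σ, ω)⟩ 1)

/-- The submodule of relations. -/
noncomputable def PRel : Submodule ↥K (FreeMod A K HB HdR) :=
  Submodule.span ↥K {x | RelGen A K HB HdR x}

/-- The space of formal periods `P(A)`. -/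
abbrev PA := FreeMod A K HB HdR ⧸ PRel A K HB HdR

/-- The class of the formal period `(σ ⊗ ω)_M` in `P(A)`. -/
noncomputable def per (M : A) (σ : HB.H.obj M) (ω : Module.Dual ↥K (HdR.H.obj M)) :
    PA A K HB HdR :=
  Submodule.Quotient.mk (Finsupp.single ⟨M, (σ, ω)⟩ 1)

/-- A concrete theory of periods: a natural isomorphism `∫ : H_B ⊗_ℚ ℂ ≅ H_dR ⊗_K ℂ`. -/
structure PeriodPairing where
  int : ∀ M : A, (ℂ ⊗[ℚ] HB.H.obj M) ≃ₗ[ℂ] (ℂ ⊗[↥K] HdR.H.obj M)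
  naturality : ∀ {M N : A} (f : M ⟶ N),
    (int N).toLinearMap ∘ₗ LinearMap.baseChange ℂ (HB.H.map f).hom
      = LinearMap.baseChange ℂ (HdR.H.map f).hom ∘ₗ (int M).toLinearMap

/-- `∫_σ ω = ω(∫_M(σ))`. -/
noncomputable def evalInt (P : PeriodPairing A K HB HdR) (M : A) (σ : HB.H.obj M)
    (ω : Module.Dual ↥K (HdR.H.obj M)) : ℂ :=
  (TensorProduct.rid ↥K ℂ) ((LinearMap.baseChange ℂ ω) ((P.int M) ((1 : ℂ) ⊗ₜ[ℚ] σ)))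

/-- The evaluation map on the free module on symbols `(σ ⊗ ω)_M`. -/
noncomputable def evalFree (P : PeriodPairing A K HB HdR) : FreeMod A K HB HdR →ₗ[↥K] ℂ :=
  Finsupp.lift ℂ ↥K (PIdx A K HB HdR) (fun t => evalInt A K HB HdR P t.1 t.2.1 t.2.2)

universe w w'

attribute [local instance] Abelian.hasFiniteBiproducts

/-!
`⇐`: every element of `P(A)` is a single period `(σ ⊗ ω)_X` (use direct sums), and an exact
sequence `0 → N' → M → N → 0` with `σ ∈ H_B(N')`, `ω ∈ H_dR(N)^∨` kills `(σ ⊗ ω)_M` through the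
relations for `N' → M` and `M → N`.

`⇒`: if `(σ ⊗ ω)_M` vanishes in `P(A)`, it is a combination of finitely many relations, which
involve finitely many objects; let `X` be their direct sum (with `M` among them) and `s ∈ H_B(X)`
the image of `σ`. Let `A₀ → X` be minimal with `s ∈ H_B(A₀)`. By Nori's trick, `H_B(X) ≅ Hom(G, X)`
for the subobject `G ⊆ X^n` generated by a basis of `H_B(X)`, so every de Rham class `ξ` coming
from `A₀` is `U(s)` for an additive `U : H_B(X) → H_dR(X)` commuting with `End(X)`. Cut down to the
summands, `U` is natural on the objects in the relations, so pairing with it kills them; hence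
`ω(ξ) = 0` for every `ξ` from `A₀`, and `0 → M ×_X A₀ → M → M/(M ×_X A₀) → 0` does the job.
-/

section ExactFunctor

variable {A : Type u} [Category.{v} A] [Abelian A] {F : Type*} [Field F]
  (H : A ⥤ ModuleCat.{w} F)

lemma range_map_kernelι [PreservesFiniteLimits H] [PreservesFiniteColimits H]
    {X Y : A} (f : X ⟶ Y) :
    LinearMap.range (H.map (kernel.ι f)).hom = LinearMap.ker (H.map f).hom :=
  (ShortComplex.moduleCat_exact_iff_range_eq_ker _).1 ((ShortComplex.exact_kernel f).map H)

lemma range_map_eq_ker_map_cokernelπ [PreservesFiniteLimits H] [PreservesFiniteColimits H]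
    {X Y : A} (f : X ⟶ Y) :
    LinearMap.range (H.map f).hom = LinearMap.ker (H.map (cokernel.π f)).hom :=
  (ShortComplex.moduleCat_exact_iff_range_eq_ker _).1 ((ShortComplex.exact_cokernel f).map H)

lemma exists_map_pullbackFst_eq [PreservesFiniteLimits H] {X Y Z : A} (f : X ⟶ Z)
    (g : Y ⟶ Z) {x : H.obj X} (hx : H.map f x ∈ LinearMap.range (H.map g).hom) :
    ∃ t, H.map (pullback.fst f g) t = x := by
  obtain ⟨y, hy⟩ := hx
  refine ⟨(PreservesPullback.iso H f g).inv
    (Concrete.pullbackMk (H.map f) (H.map g) x y hy.symm), ?_⟩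
  rw [← ConcreteCategory.comp_apply, PreservesPullback.iso_inv_fst, Concrete.pullbackMk_fst]

/-- No proper subobject of `G` has a realization containing `w` (phrased with arbitrary maps
`C ⟶ G`, which avoids images). -/
def Generates {G : A} (w : H.obj G) : Prop :=
  ∀ ⦃C : A⦄ (c : C ⟶ G), w ∈ LinearMap.range (H.map c).hom → Epi c

variable {H}

lemma exists_generates [PreservesFiniteLimits H] [H.Faithful]
    [∀ M, FiniteDimensional F (H.obj M)] {X : A} (s : H.obj X) :
    ∃ (G : A) (m : G ⟶ X) (w : H.obj G), H.map m w = s ∧ Generates H w := by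
  classical
  have hex : ∃ n, ∃ (G : A) (m : G ⟶ X) (w : H.obj G), H.map m w = s ∧
      Module.finrank F (H.obj G) = n := ⟨_, X, 𝟙 X, s, by simp, rfl⟩
  obtain ⟨G, m, w, hw, hdim⟩ := Nat.find_spec hex
  refine ⟨G, m, w, hw, fun C c ⟨v, hv⟩ => ?_⟩
  have hmin : Module.finrank F (H.obj G) ≤ Module.finrank F (H.obj (image c)) :=
    hdim ▸ Nat.find_min' hex ⟨image c, image.ι c ≫ m, H.map (factorThruImage c) v,
      by rw [← ConcreteCategory.comp_apply, ← H.map_comp, image.fac_assoc, H.map_comp,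
        ConcreteCategory.comp_apply, hv, hw], rfl⟩
  have hinj : Function.Injective (H.map (image.ι c)) :=
    (ModuleCat.mono_iff_injective _).1 inferInstance
  have : IsIso (H.map (image.ι c)) := by
    rw [ConcreteCategory.isIso_iff_bijective]
    refine ⟨hinj, ?_⟩
    exact (LinearMap.injective_iff_surjective_of_finrank_eq_finrank
      (le_antisymm (LinearMap.finrank_le_finrank_of_injective hinj) hmin)).1 hinj
  have : IsIso (image.ι c) := isIso_of_reflects_iso _ H
  rw [← image.fac c]
  infer_instance

lemma Generates.eq_zero_of_map_eq_zero [PreservesFiniteLimits H] [PreservesFiniteColimits H]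
    {G Y : A} {w : H.obj G} (hw : Generates H w) {φ : G ⟶ Y} (hφ : H.map φ w = 0) : φ = 0 :=
  have := hw (kernel.ι φ) (by rw [range_map_kernelι]; exact hφ)
  zero_of_epi_comp _ (kernel.condition φ)

lemma Generates.range_le [PreservesFiniteLimits H] {F' : Type*} [Field F']
    {H' : A ⥤ ModuleCat.{w'} F'} [PreservesFiniteColimits H'] {G X Y : A} {w : H.obj G}
    (hw : Generates H w) (m : G ⟶ X) (f : Y ⟶ X)
    (hmf : H.map m w ∈ LinearMap.range (H.map f).hom) :
    LinearMap.range (H'.map m).hom ≤ LinearMap.range (H'.map f).hom := by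
  have := hw _ (exists_map_pullbackFst_eq H m f hmf)
  rintro _ ⟨x, rfl⟩
  obtain ⟨t, rfl⟩ :=
    (ModuleCat.epi_iff_surjective (H'.map (pullback.fst m f))).1 inferInstance x
  exact ⟨H'.map (pullback.snd m f) t, by
    rw [← ConcreteCategory.comp_apply, ← ConcreteCategory.comp_apply, ← H'.map_comp,
      ← H'.map_comp, pullback.condition]⟩

lemma exists_shortExact_of_map_eq_zero [PreservesFiniteLimits H] [PreservesFiniteColimits H]
    {F' : Type*} [Field F'] {H' : A ⥤ ModuleCat.{w'} F'} [PreservesFiniteLimits H']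
    [PreservesFiniteColimits H'] {M Y : A} (h : M ⟶ Y) {σ : H.obj M} (hσ : H.map h σ = 0)
    {ω : Module.Dual F' (H'.obj M)} (hω : ∀ x, H'.map h x = 0 → ω x = 0) :
    ∃ (N' N : A) (f : N' ⟶ M) (g : M ⟶ N) (w : f ≫ g = 0),
      (ShortComplex.mk f g w).ShortExact ∧ σ ∈ LinearMap.range (H.map f).hom ∧
        ω ∈ LinearMap.range (H'.map g).hom.dualMap := by
  refine ⟨_, _, kernel.ι h, cokernel.π (kernel.ι h), cokernel.condition _,
    { exact := ShortComplex.exact_cokernel _ }, by rw [range_map_kernelι]; exact hσ, ?_⟩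
  rw [LinearMap.range_dualMap_eq_dualAnnihilator_ker, ← range_map_eq_ker_map_cokernelπ,
    range_map_kernelι, Submodule.mem_dualAnnihilator]
  exact hω

end ExactFunctor

section AdditiveFunctor

variable {A : Type u} [Category.{v} A] [Preadditive A] {R R' : Type*} [Ring R] [Ring R']

def evalAt (H : A ⥤ ModuleCat.{w} R) [H.Additive] {G : A} (w : H.obj G) (X : A) :
    (G ⟶ X) →+ H.obj X :=
  AddMonoidHom.mk' (fun φ => H.map φ w) (fun φ ψ => by simp [Functor.map_add])

lemma exists_equivariant_of_bijective_evalAt {H : A ⥤ ModuleCat.{w} R}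
    {H' : A ⥤ ModuleCat.{w'} R'} [H.Additive] [H'.Additive] {G X : A} {w : H.obj G}
    (hw : Function.Bijective (evalAt H w X)) (wD : H'.obj G) :
    ∃ U : H.obj X →+ H'.obj X,
      (∀ (f : X ⟶ X) a, U (H.map f a) = H'.map f (U a)) ∧
      ∀ φ : G ⟶ X, U (H.map φ w) = H'.map φ wD := by
  let e := AddEquiv.ofBijective _ hw
  have he : ∀ φ : G ⟶ X, e.symm (H.map φ w) = φ := e.symm_apply_apply
  have he_map : ∀ (f : X ⟶ X) a, e.symm (H.map f a) = e.symm a ≫ f := fun f a => by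
    obtain ⟨ψ, rfl⟩ := e.surjective a
    rw [e.symm_apply_apply, ← he (ψ ≫ f), H.map_comp]
    rfl
  refine ⟨(evalAt H' wD X).comp e.symm.toAddMonoidHom, fun f a => ?_, fun φ => ?_⟩
  · simp [he_map, evalAt]
  · simp [he, evalAt]

end AdditiveFunctor

section FiberFunctor

variable {A : Type u} [Category.{v} A] [Abelian A] [CategoryTheory.Linear ℚ A]
  {F : Type} [Field F] [Algebra ℚ F]

namespace FiberFunctor

instance (T : FiberFunctor A F) : T.H.Additive := T.additive
instance (T : FiberFunctor A F) : T.H.Faithful := T.faithful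
instance (T : FiberFunctor A F) : PreservesFiniteLimits T.H := T.exact_left
instance (T : FiberFunctor A F) : PreservesFiniteColimits T.H := T.exact_right
instance (T : FiberFunctor A F) (M : A) : FiniteDimensional F (T.H.obj M) := T.finDim M

end FiberFunctor

lemma surjective_evalAt_of_map_eq_sum (T : FiberFunctor A ℚ) {X G : A} {ι : Type} [Fintype ι]
    {b : ι → T.H.obj X} (hb : Submodule.span ℚ (Set.range b) = ⊤)
    (m : G ⟶ ⨁ fun _ : ι => X) (w : T.H.obj G)
    (hw : T.H.map m w = ∑ i, T.H.map (biproduct.ι (fun _ : ι => X) i) (b i)) :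
    Function.Surjective (evalAt T.H w X) := by
  classical
  intro τ
  obtain ⟨c, rfl⟩ :=
    (Submodule.mem_span_range_iff_exists_fun ℚ).1 (hb ▸ Submodule.mem_top : τ ∈ _)
  refine ⟨∑ i, c i • (m ≫ biproduct.π _ i), ?_⟩
  have hπ : ∀ i, T.H.map (biproduct.π _ i) (T.H.map m w) = b i := fun i => by
    simp [hw, ← ConcreteCategory.comp_apply, ← Functor.map_comp, biproduct.ι_π, apply_ite,
      ite_apply]
  simp [evalAt, T.linear, hπ]

lemma exists_bijective_evalAt (T : FiberFunctor A ℚ) (X : A) :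
    ∃ (G : A) (w : T.H.obj G), Function.Bijective (evalAt T.H w X) := by
  let b := Module.finBasis ℚ (T.H.obj X)
  obtain ⟨G, m, w, hw, hgen⟩ :=
    exists_generates (∑ i, T.H.map (biproduct.ι (fun _ => X) i) (b i))
  refine ⟨G, w, (injective_iff_map_eq_zero _).2 fun φ hφ => hgen.eq_zero_of_map_eq_zero hφ,
    surjective_evalAt_of_map_eq_sum T b.span_eq m w hw⟩

lemma exists_equivariant_of_mem_range (HB : FiberFunctor A ℚ) (HdR : FiberFunctor A F)
    {X : A} (s : HB.H.obj X) :
    ∃ (A₀ : A) (i : A₀ ⟶ X), s ∈ LinearMap.range (HB.H.map i).hom ∧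
      ∀ ξ ∈ LinearMap.range (HdR.H.map i).hom, ∃ U : HB.H.obj X →+ HdR.H.obj X,
        (∀ (f : X ⟶ X) a, U (HB.H.map f a) = HdR.H.map f (U a)) ∧ U s = ξ := by
  obtain ⟨A₀, i, w₀, rfl, hgen⟩ := exists_generates s
  obtain ⟨G, w, hw⟩ := exists_bijective_evalAt HB X
  obtain ⟨φ, hφ⟩ := hw.2 (HB.H.map i w₀)
  refine ⟨A₀, i, ⟨w₀, rfl⟩, fun ξ hξ => ?_⟩
  obtain ⟨wD, rfl⟩ := hgen.range_le (H' := HdR.H) i φ ⟨w, hφ⟩ hξ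
  obtain ⟨U, hU, hUφ⟩ := exists_equivariant_of_bijective_evalAt hw wD
  exact ⟨U, hU, by rw [← hφ]; exact hUφ φ⟩

end FiberFunctor

section Periods

variable {A : Type u} [Category.{v} A] [Abelian A] [CategoryTheory.Linear ℚ A]
  {K : Subfield ℂ} {HB : FiberFunctor A ℚ} {HdR : FiberFunctor A K}

lemma per_eq_per_of_relGen {x y : FreeMod A K HB HdR} (h : RelGen A K HB HdR (x - y)) :
    (Submodule.Quotient.mk x : PA A K HB HdR) = Submodule.Quotient.mk y :=
  (Submodule.Quotient.eq _).2 (Submodule.subset_span h)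

lemma per_add_left (M : A) (σ σ' : HB.H.obj M) (ω : Module.Dual K (HdR.H.obj M)) :
    per A K HB HdR M (σ + σ') ω = per A K HB HdR M σ ω + per A K HB HdR M σ' ω :=
  per_eq_per_of_relGen (Or.inl ⟨M, σ, σ', ω, by rw [sub_add_eq_sub_sub]⟩)

lemma per_add_right (M : A) (σ : HB.H.obj M) (ω ω' : Module.Dual K (HdR.H.obj M)) :
    per A K HB HdR M σ (ω + ω') = per A K HB HdR M σ ω + per A K HB HdR M σ ω' :=
  per_eq_per_of_relGen (Or.inr <| Or.inl ⟨M, σ, ω, ω', by rw [sub_add_eq_sub_sub]⟩)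

lemma per_smul_right (M : A) (σ : HB.H.obj M) (c : K) (ω : Module.Dual K (HdR.H.obj M)) :
    per A K HB HdR M σ (c • ω) = c • per A K HB HdR M σ ω :=
  per_eq_per_of_relGen (Or.inr <| Or.inr <| Or.inr <| Or.inl
    ⟨M, c, σ, ω, by simp [Finsupp.smul_single]⟩)

lemma per_comp {M N : A} (α : M ⟶ N) (σ : HB.H.obj M) (ω : Module.Dual K (HdR.H.obj N)) :
    per A K HB HdR M σ (ω.comp (HdR.H.map α).hom) = per A K HB HdR N (HB.H.map α σ) ω :=
  per_eq_per_of_relGen (Or.inr <| Or.inr <| Or.inr <| Or.inr ⟨M, N, α, σ, ω, rfl⟩)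

lemma per_zero_left (M : A) (ω : Module.Dual K (HdR.H.obj M)) : per A K HB HdR M 0 ω = 0 := by
  simpa using per_add_left (HdR := HdR) M 0 0 ω

lemma per_zero_right (M : A) (σ : HB.H.obj M) : per A K HB HdR M σ 0 = 0 := by
  simpa using per_add_right (HdR := HdR) M σ 0 0

lemma per_biprod (X Y : A) (σ : HB.H.obj X) (τ : HB.H.obj Y)
    (ω : Module.Dual K (HdR.H.obj X)) (η : Module.Dual K (HdR.H.obj Y)) :
    per A K HB HdR (X ⊞ Y) (HB.H.map biprod.inl σ + HB.H.map biprod.inr τ)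
        (ω.comp (HdR.H.map biprod.fst).hom + η.comp (HdR.H.map biprod.snd).hom)
      = per A K HB HdR X σ ω + per A K HB HdR Y τ η := by
  rw [per_add_left, per_add_right, per_add_right, per_comp, per_comp, per_comp, per_comp]
  simp [← ConcreteCategory.comp_apply, ← Functor.map_comp, per_zero_left]

open ZeroObject in
lemma exists_eq_per (a : PA A K HB HdR) :
    ∃ (X : A) (σ : HB.H.obj X) (ω : Module.Dual K (HdR.H.obj X)), a = per A K HB HdR X σ ω := by
  obtain ⟨x, rfl⟩ := Submodule.Quotient.mk_surjective _ a
  induction x using Finsupp.induction_linear with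
  | zero => exact ⟨0, 0, 0, by rw [Submodule.Quotient.mk_zero, per_zero_left]⟩
  | add x y hx hy =>
    obtain ⟨X, σ, ω, hX⟩ := hx
    obtain ⟨Y, τ, η, hY⟩ := hy
    exact ⟨X ⊞ Y, _, _, by rw [Submodule.Quotient.mk_add, hX, hY, per_biprod]⟩
  | single t c =>
    refine ⟨t.1, t.2.1, c • t.2.2, ?_⟩
    rw [per_smul_right, per, ← Submodule.Quotient.mk_smul, Finsupp.smul_single, smul_eq_mul,
      mul_one]

lemma per_map_dualMap_eq_zero {N' M N : A} {f : N' ⟶ M} {g : M ⟶ N} (w : f ≫ g = 0)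
    (σ : HB.H.obj N') (μ : Module.Dual K (HdR.H.obj N)) :
    per A K HB HdR M (HB.H.map f σ) ((HdR.H.map g).hom.dualMap μ) = 0 := by
  rw [← per_comp]
  convert per_zero_right (HdR := HdR) N' σ
  ext x
  simp [← ConcreteCategory.comp_apply, ← Functor.map_comp, w]

lemma liftQ_per (P : PeriodPairing A K HB HdR)
    (hRel : PRel A K HB HdR ≤ LinearMap.ker (evalFree A K HB HdR P)) (M : A)
    (σ : HB.H.obj M) (ω : Module.Dual K (HdR.H.obj M)) :
    (PRel A K HB HdR).liftQ (evalFree A K HB HdR P) hRel (per A K HB HdR M σ ω)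
      = evalInt A K HB HdR P M σ ω := by
  simp [per, evalFree]

end Periods

section Pairing

variable {A : Type u} [Category.{v} A] [Abelian A] [CategoryTheory.Linear ℚ A]
  {K : Subfield ℂ} {HB : FiberFunctor A ℚ} {HdR : FiberFunctor A K}

noncomputable def pairing (u : ∀ Z : A, HB.H.obj Z →+ HdR.H.obj Z) :
    FreeMod A K HB HdR →ₗ[K] K :=
  Finsupp.lift K K (PIdx A K HB HdR) fun t => t.2.2 (u t.1 t.2.1)

lemma pairing_single (u : ∀ Z : A, HB.H.obj Z →+ HdR.H.obj Z) (t : PIdx A K HB HdR) (c : K) :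
    pairing u (Finsupp.single t c) = c * t.2.2 (u t.1 t.2.1) := by
  simp [pairing]

def IsNaturalOn (O : Set A) (u : ∀ Z : A, HB.H.obj Z →+ HdR.H.obj Z) : Prop :=
  ∀ ⦃Z Z' : A⦄, Z ∈ O → Z' ∈ O → ∀ (α : Z ⟶ Z') τ, u Z' (HB.H.map α τ) = HdR.H.map α (u Z τ)

lemma IsNaturalOn.mono {O O' : Set A} {u : ∀ Z : A, HB.H.obj Z →+ HdR.H.obj Z}
    (hu : IsNaturalOn O' u) (h : O ⊆ O') : IsNaturalOn O u :=
  fun _ _ hZ hZ' => hu (h hZ) (h hZ')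

lemma exists_finset_pairing_eq_zero_of_relGen {x : FreeMod A K HB HdR}
    (hx : RelGen A K HB HdR x) :
    ∃ O : Finset A, ∀ u, IsNaturalOn (O : Set A) u → pairing u x = 0 := by
  classical
  rcases hx with ⟨M, σ, σ', ω, rfl⟩ | ⟨M, σ, ω, ω', rfl⟩ | ⟨M, q, σ, ω, rfl⟩ |
    ⟨M, c, σ, ω, rfl⟩ | ⟨M, N, α, σ, ω, rfl⟩
  · exact ⟨∅, fun u _ => by simp [pairing_single]⟩
  · exact ⟨∅, fun u _ => by simp [pairing_single]⟩
  · refine ⟨∅, fun u _ => ?_⟩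
    have := map_rat_smul ((ω : HdR.H.obj M →+ K).comp (u M)) q σ
    simp_all [pairing_single, Algebra.smul_def]
  · exact ⟨∅, fun u _ => by simp [pairing_single]⟩
  · exact ⟨{M, N}, fun u hu => by simp [pairing_single, hu (by simp) (by simp) α σ]⟩

lemma exists_finset_pairing_eq_zero {x : FreeMod A K HB HdR} (hx : x ∈ PRel A K HB HdR) :
    ∃ O : Finset A, ∀ u, IsNaturalOn (O : Set A) u → pairing u x = 0 := by
  classical
  induction hx using Submodule.span_induction with
  | mem x hx => exact exists_finset_pairing_eq_zero_of_relGen hx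
  | zero => exact ⟨∅, fun u _ => map_zero _⟩
  | add x y _ _ hx hy =>
    obtain ⟨O, hO⟩ := hx
    obtain ⟨O', hO'⟩ := hy
    refine ⟨O ∪ O', fun u hu => ?_⟩
    rw [map_add, hO u (hu.mono (by simp)), hO' u (hu.mono (by simp)), add_zero]
  | smul c x _ hx =>
    obtain ⟨O, hO⟩ := hx
    exact ⟨O, fun u hu => by rw [map_smul, hO u hu, smul_zero]⟩

end Pairing

section Forward

variable {A : Type u} [Category.{v} A] [Abelian A] [CategoryTheory.Linear ℚ A]
  {K : Subfield ℂ} {HB : FiberFunctor A ℚ} {HdR : FiberFunctor A K}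

open Classical in
noncomputable def restrictFamily (O : Finset A)
    (U : HB.H.obj (⨁ fun z : O => (z : A)) →+ HdR.H.obj (⨁ fun z : O => (z : A))) (Z : A) :
    HB.H.obj Z →+ HdR.H.obj Z :=
  if h : Z ∈ O then
    (HdR.H.map (biproduct.π (fun z : O => (z : A)) ⟨Z, h⟩)).hom.toAddMonoidHom.comp
      (U.comp (HB.H.map (biproduct.ι (fun z : O => (z : A)) ⟨Z, h⟩)).hom.toAddMonoidHom)
  else 0

lemma restrictFamily_apply {O : Finset A}
    (U : HB.H.obj (⨁ fun z : O => (z : A)) →+ HdR.H.obj (⨁ fun z : O => (z : A)))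
    {Z : A} (h : Z ∈ O) (τ : HB.H.obj Z) :
    restrictFamily O U Z τ = HdR.H.map (biproduct.π (fun z : O => (z : A)) ⟨Z, h⟩)
      (U (HB.H.map (biproduct.ι (fun z : O => (z : A)) ⟨Z, h⟩) τ)) := by
  simp [restrictFamily, h]

lemma isNaturalOn_restrictFamily {O : Finset A}
    {U : HB.H.obj (⨁ fun z : O => (z : A)) →+ HdR.H.obj (⨁ fun z : O => (z : A))}
    (hU : ∀ (f : (⨁ fun z : O => (z : A)) ⟶ _) a, U (HB.H.map f a) = HdR.H.map f (U a)) :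
    IsNaturalOn (O : Set A) (restrictFamily O U) := by
  intro Z Z' hZ hZ' α τ
  let f := biproduct.π (fun z : O => (z : A)) ⟨Z, hZ⟩ ≫ α ≫
    biproduct.ι (fun z : O => (z : A)) ⟨Z', hZ'⟩
  have hι : HB.H.map (biproduct.ι _ ⟨Z', hZ'⟩) (HB.H.map α τ)
      = HB.H.map f (HB.H.map (biproduct.ι _ ⟨Z, hZ⟩) τ) := by
    simp [f, ← ConcreteCategory.comp_apply, ← Functor.map_comp]
  have hπ : ∀ y, HdR.H.map (biproduct.π _ ⟨Z', hZ'⟩) (HdR.H.map f y)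
      = HdR.H.map α (HdR.H.map (biproduct.π _ ⟨Z, hZ⟩) y) := fun y => by
    simp [f, ← ConcreteCategory.comp_apply, ← Functor.map_comp]
  rw [restrictFamily_apply U hZ, restrictFamily_apply U hZ', hι, hU, hπ]

lemma exists_shortExact_of_single_mem_PRel {M : A} {σ : HB.H.obj M}
    {ω : Module.Dual K (HdR.H.obj M)} (h : Finsupp.single ⟨M, (σ, ω)⟩ 1 ∈ PRel A K HB HdR) :
    ∃ (N' N : A) (f : N' ⟶ M) (g : M ⟶ N) (w : f ≫ g = 0),
      (ShortComplex.mk f g w).ShortExact ∧ σ ∈ LinearMap.range (HB.H.map f).hom ∧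
        ω ∈ LinearMap.range (LinearMap.dualMap (HdR.H.map g).hom) := by
  classical
  obtain ⟨O, hO⟩ := exists_finset_pairing_eq_zero h
  let O' := insert M O
  have hM : M ∈ O' := Finset.mem_insert_self M O
  let ι := biproduct.ι (fun z : O' => (z : A)) ⟨M, hM⟩
  obtain ⟨A₀, i, hs, hU⟩ := exists_equivariant_of_mem_range HB HdR (HB.H.map ι σ)
  rw [range_map_eq_ker_map_cokernelπ] at hs
  refine exists_shortExact_of_map_eq_zero (ι ≫ cokernel.π i) (by simpa using hs)
    fun x hx => ?_
  obtain ⟨U, hU_map, hU_eq⟩ := hU (HdR.H.map ι x)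
    (by rw [range_map_eq_ker_map_cokernelπ]; simpa using hx)
  have := hO (restrictFamily O' U)
    ((isNaturalOn_restrictFamily hU_map).mono (Finset.subset_insert M O))
  rw [pairing_single, one_mul, restrictFamily_apply U hM, hU_eq, ← ConcreteCategory.comp_apply,
    ← Functor.map_comp, biproduct.ι_π_self] at this
  simpa using this

end Forward

/-- **Theorem (Corollary `KORAB`).** The period conjecture (injectivity of
`eval_∫ : P(A) → ℂ`) holds if and only if every vanishing period `∫_σ ω = 0` on an object
`M` is explained by an exact sequence `0 → N' → M → N → 0` with `σ ∈ H_B(N')` and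
`ω ∈ H_dR(N)^∨`. -/
theorem period_conjecture_iff (P : PeriodPairing A K HB HdR)
    (hRel : PRel A K HB HdR ≤ LinearMap.ker (evalFree A K HB HdR P)) :
    Function.Injective ((PRel A K HB HdR).liftQ (evalFree A K HB HdR P) hRel) ↔
      (∀ (M : A) (σ : HB.H.obj M) (ω : Module.Dual ↥K (HdR.H.obj M)),
        evalInt A K HB HdR P M σ ω = 0 →
        ∃ (N' N : A) (f : N' ⟶ M) (g : M ⟶ N) (w : f ≫ g = 0),
          (ShortComplex.mk f g w).ShortExact ∧
          σ ∈ LinearMap.range (HB.H.map f).hom ∧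
          ω ∈ LinearMap.range (LinearMap.dualMap (HdR.H.map g).hom)) := by
  refine ⟨fun hinj M σ ω hω => exists_shortExact_of_single_mem_PRel ?_, fun h => ?_⟩
  · rw [← Submodule.Quotient.mk_eq_zero]
    apply hinj
    rw [map_zero, ← hω, ← liftQ_per P hRel]
    rfl
  · rw [injective_iff_map_eq_zero]
    intro a ha
    obtain ⟨X, σ, ω, rfl⟩ := exists_eq_per a
    rw [liftQ_per] at ha
    obtain ⟨N', N, f, g, w, -, ⟨σ', rfl⟩, ⟨μ, rfl⟩⟩ := h X σ ω ha
    exact per_map_dualMap_eq_zero w σ' μ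
end

section
/- For each M ∈ A, the assignment σ ⊗ ω ↦ ω(∫_M(σ)) descends to a well-defined K-linear map eval_∫ : P^∞(M) → ℂ, and for every morphism f : M → M' in Q̃A the diagram commutes: eval_∫ ∘ P^∞(f) = eval_∫ as maps P^∞(M) → ℂ. -/
set_option maxHeartbeats 1000000
set_option synthInstance.maxHeartbeats 400000

open CategoryTheory CategoryTheory.Limits Module TensorProduct

universe v u

attribute [local instance] CategoryTheory.Abelian.hasFiniteBiproducts

variable (A : Type u) [Category.{v} A] [Abelian A] [CategoryTheory.Linear ℚ A]
variable (K : Subfield ℂ)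
variable (HB : FiberFunctor A ℚ) (HdR : FiberFunctor A ↥K)

/-- `P(M)`: the image of `H_B(M) ⊗_ℚ H_dR(M)^∨` in `P(A)`. -/
noncomputable def PM (M : A) : Submodule ↥K (PA A K HB HdR) :=
  Submodule.span ↥K {x | ∃ σ ω, x = per A K HB HdR M σ ω}

/-- The `m`-th power `M^m` of an object. -/
noncomputable abbrev pow (M : A) (m : ℕ) : A := ⨁ (fun _ : Fin m => M)

/-- The free `K`-module on symbols `σ ⊗ ω` for a single object `M`,
of which `H_B(M) ⊗_ℚ H_dR(M)^∨` is the quotient by the bilinearity relations. -/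
abbrev FreeModM (M : A) := ((HB.H.obj M) × Module.Dual ↥K (HdR.H.obj M)) →₀ ↥K

/-- Generators of the relations defining `P^k(M)` (`k ∈ ℕ ∪ {∞}`, encoded as `k : ℕ∞`):
bilinearity relations together with the depth `≤ k` relations `∑_{i=1}^m σ_i ⊗ ω_i = 0`
for every exact sequence `0 → N' → M^m → N → 0` with `m ≤ k`, `(σ_i) ∈ H_B(N')` and
`(ω_i) ∈ H_dR(N)^∨`. -/
def RelGenDepth (M : A) (k : ℕ∞) (x : FreeModM A K HB HdR M) : Prop :=
  (∃ (σ σ' : HB.H.obj M) (ω : Module.Dual ↥K (HdR.H.obj M)),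
      x = Finsupp.single (σ + σ', ω) 1 - Finsupp.single (σ, ω) 1 - Finsupp.single (σ', ω) 1) ∨
  (∃ (σ : HB.H.obj M) (ω ω' : Module.Dual ↥K (HdR.H.obj M)),
      x = Finsupp.single (σ, ω + ω') 1 - Finsupp.single (σ, ω) 1 - Finsupp.single (σ, ω') 1) ∨
  (∃ (q : ℚ) (σ : HB.H.obj M) (ω : Module.Dual ↥K (HdR.H.obj M)),
      x = Finsupp.single (q • σ, ω) 1 - Finsupp.single (σ, ω) (algebraMap ℚ ↥K q)) ∨
  (∃ (c : ↥K) (σ : HB.H.obj M) (ω : Module.Dual ↥K (HdR.H.obj M)),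
      x = Finsupp.single (σ, c • ω) 1 - Finsupp.single (σ, ω) c) ∨
  (∃ (m : ℕ), 1 ≤ m ∧ (m : ℕ∞) ≤ k ∧
    ∃ (N' N : A) (f : N' ⟶ pow A M m) (g : pow A M m ⟶ N) (w : f ≫ g = 0),
      (ShortComplex.mk f g w).ShortExact ∧
      ∃ (s : HB.H.obj N') (ω' : Module.Dual ↥K (HdR.H.obj N)),
        x = ∑ j : Fin m,
          Finsupp.single
            (HB.H.map (f ≫ biproduct.π (fun _ : Fin m => M) j) s,
             ω'.comp (HdR.H.map (biproduct.ι (fun _ : Fin m => M) j ≫ g)).hom) 1)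

/-- The submodule of relations defining `P^k(M)`. -/
noncomputable def PRelDepth (M : A) (k : ℕ∞) : Submodule ↥K (FreeModM A K HB HdR M) :=
  Submodule.span ↥K {x | RelGenDepth A K HB HdR M k x}

/-- The space `P^k(M)` of formal periods of depth `k` of `M`; `P^∞(M)` is `PkM M ⊤`. -/
abbrev PkM (M : A) (k : ℕ∞) := FreeModM A K HB HdR M ⧸ PRelDepth A K HB HdR M k

/-- The canonical map from the free module on symbols `σ ⊗ ω` at `M` to the one on all
symbols `(σ ⊗ ω)_N`, inducing the canonical map `P^∞(M) → P(A)`. -/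
noncomputable def toFree (M : A) : FreeModM A K HB HdR M →ₗ[↥K] FreeMod A K HB HdR :=
  Finsupp.lmapDomain ↥K ↥K (fun t => (⟨M, t⟩ : PIdx A K HB HdR))

/-- A span `M ⟵p N ⟶i M'` with `p` an epimorphism and `i` a monomorphism; such spans
(up to equivalence) are the morphisms `M ⟶ M'` of the category `Q̃A`, and the functor
`P^∞` takes the class of the span to the map `P^∞(M) → P^∞(M')` sending `σ ⊗ ω` to
`H_B(i)(σ') ⊗ ω'` whenever `H_B(p)(σ') = σ` and `ω' ∘ H_dR(i) = ω ∘ H_dR(p)`. -/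
structure QSpan (M M' : A) where
  N : A
  p : N ⟶ M
  i : N ⟶ M'
  epi : Epi p
  mono : Mono i

/-- The evaluation map on the free module on symbols `σ ⊗ ω` at `M`. -/
noncomputable def evalFreeM (P : PeriodPairing A K HB HdR) (M : A) :
    FreeModM A K HB HdR M →ₗ[↥K] ℂ :=
  Finsupp.lift ℂ ↥K _ (fun t => evalInt A K HB HdR P M t.1 t.2)

/-!
Naturality of `∫` gives `∫_{H_B(α) σ} ω = ∫_σ ω ∘ H_dR(α)` for every morphism `α`. For a span
`M ⟵p N ⟶i M'` this moves both sides of the triangle to `N`, where they agree. For a relation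
coming from `f : N' ⟶ M^m`, `g : M^m ⟶ N` it moves every summand to `N'`, and since
`∑ⱼ (f ≫ πⱼ) ≫ (ιⱼ ≫ g) = f ≫ g = 0` the sum is `∫_s 0 = 0`. The remaining relations only
express that `(σ, ω) ↦ ∫_σ ω` is bilinear.
-/

attribute [local instance] FiberFunctor.additive

theorem sum_comp_π_comp_ι_comp {C : Type*} [Category C] [Preadditive C] {ι : Type} [Fintype ι]
    (X : ι → C) [HasBiproduct X] {N' N : C} (f : N' ⟶ ⨁ X) (g : ⨁ X ⟶ N) :
    ∑ j, (f ≫ biproduct.π X j) ≫ (biproduct.ι X j ≫ g) = f ≫ g := by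
  calc ∑ j, (f ≫ biproduct.π X j) ≫ (biproduct.ι X j ≫ g)
      = f ≫ (∑ j, biproduct.π X j ≫ biproduct.ι X j) ≫ g := by
        simp only [Preadditive.sum_comp, Preadditive.comp_sum, Category.assoc]
    _ = f ≫ g := by rw [biproduct.total, Category.id_comp]

section

variable {A K HB HdR} (P : PeriodPairing A K HB HdR)

theorem evalInt_map {M N : A} (α : M ⟶ N) (σ : HB.H.obj M)
    (ω : Module.Dual ↥K (HdR.H.obj N)) :
    evalInt A K HB HdR P N (HB.H.map α σ) ω
      = evalInt A K HB HdR P M σ (ω.comp (HdR.H.map α).hom) := by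
  have h := LinearMap.congr_fun (P.naturality α) ((1 : ℂ) ⊗ₜ[ℚ] σ)
  simp only [LinearMap.comp_apply, LinearEquiv.coe_coe, LinearMap.baseChange_tmul] at h
  rw [evalInt, h, ← LinearMap.comp_apply, ← LinearMap.baseChange_comp, evalInt]

theorem evalInt_add_left (M : A) (σ σ' : HB.H.obj M) (ω : Module.Dual ↥K (HdR.H.obj M)) :
    evalInt A K HB HdR P M (σ + σ') ω
      = evalInt A K HB HdR P M σ ω + evalInt A K HB HdR P M σ' ω := by
  simp only [evalInt, TensorProduct.tmul_add, map_add]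

theorem evalInt_smul_left (M : A) (q : ℚ) (σ : HB.H.obj M)
    (ω : Module.Dual ↥K (HdR.H.obj M)) :
    evalInt A K HB HdR P M (q • σ) ω = algebraMap ℚ ↥K q • evalInt A K HB HdR P M σ ω := by
  rw [algebraMap_smul]
  simp only [evalInt, TensorProduct.tmul_smul, map_rat_smul]

theorem evalInt_add_right (M : A) (σ : HB.H.obj M) (ω ω' : Module.Dual ↥K (HdR.H.obj M)) :
    evalInt A K HB HdR P M σ (ω + ω')
      = evalInt A K HB HdR P M σ ω + evalInt A K HB HdR P M σ ω' := by
  simp only [evalInt, LinearMap.baseChange_add, LinearMap.add_apply, map_add]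

theorem evalInt_smul_right (M : A) (c : ↥K) (σ : HB.H.obj M)
    (ω : Module.Dual ↥K (HdR.H.obj M)) :
    evalInt A K HB HdR P M σ (c • ω) = c • evalInt A K HB HdR P M σ ω := by
  simp only [evalInt, LinearMap.baseChange_smul, LinearMap.smul_apply, map_smul]

noncomputable def evalIntDual (M : A) (σ : HB.H.obj M) :
    Module.Dual ↥K (HdR.H.obj M) →ₗ[↥K] ℂ where
  toFun := evalInt A K HB HdR P M σ
  map_add' := evalInt_add_right P M σ
  map_smul' c := evalInt_smul_right P M c σ

theorem evalFreeM_single (M : A) (t : HB.H.obj M × Module.Dual ↥K (HdR.H.obj M)) (c : ↥K) :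
    evalFreeM A K HB HdR P M (Finsupp.single t c) = c • evalInt A K HB HdR P M t.1 t.2 :=
  Finsupp.lift_apply .. |>.trans (Finsupp.sum_single_index (zero_smul _ _))

theorem evalInt_sum_map {ι : Type*} (s : Finset ι) {N' N : A} {Y : ι → A}
    (a : ∀ j, N' ⟶ Y j) (b : ∀ j, Y j ⟶ N) (x : HB.H.obj N')
    (ω : Module.Dual ↥K (HdR.H.obj N)) :
    ∑ j ∈ s, evalInt A K HB HdR P (Y j) (HB.H.map (a j) x) (ω.comp (HdR.H.map (b j)).hom)
      = evalInt A K HB HdR P N' x (ω.comp (HdR.H.map (∑ j ∈ s, a j ≫ b j)).hom) := by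
  have hω : ω.comp (HdR.H.map (∑ j ∈ s, a j ≫ b j)).hom
      = ∑ j ∈ s, ω.comp (HdR.H.map (a j ≫ b j)).hom := by
    ext v
    simp [LinearMap.sum_apply, map_sum]
  simp only [evalInt_map, hω, Functor.map_comp]
  exact (map_sum (evalIntDual P N' x) _ s).symm

theorem evalFreeM_eq_zero_of_relGenDepth {M : A} {k : ℕ∞} {x : FreeModM A K HB HdR M}
    (hx : RelGenDepth A K HB HdR M k x) : evalFreeM A K HB HdR P M x = 0 := by
  obtain ⟨σ, σ', ω, rfl⟩ | ⟨σ, ω, ω', rfl⟩ | ⟨q, σ, ω, rfl⟩ | ⟨c, σ, ω, rfl⟩ |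
      ⟨m, -, -, N', N, f, g, w, -, s, ω', rfl⟩ := hx
  · simp [evalFreeM_single, evalInt_add_left]
  · simp [evalFreeM_single, evalInt_add_right]
  · simp [evalFreeM_single, evalInt_smul_left]
  · simp [evalFreeM_single, evalInt_smul_right]
  · simp only [map_sum, evalFreeM_single, one_smul]
    rw [evalInt_sum_map, sum_comp_π_comp_ι_comp, w, Functor.map_zero, ModuleCat.hom_zero,
      LinearMap.comp_zero]
    exact (evalIntDual P N' s).map_zero

theorem pRelDepth_le_ker_evalFreeM (M : A) (k : ℕ∞) :
    PRelDepth A K HB HdR M k ≤ LinearMap.ker (evalFreeM A K HB HdR P M) :=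
  Submodule.span_le.mpr fun _ hx => evalFreeM_eq_zero_of_relGenDepth P hx

theorem evalInt_map_eq_of_comp_eq {N M M' : A} (p : N ⟶ M) (i : N ⟶ M') (σ : HB.H.obj N)
    {ω : Module.Dual ↥K (HdR.H.obj M)} {ω' : Module.Dual ↥K (HdR.H.obj M')}
    (h : ω'.comp (HdR.H.map i).hom = ω.comp (HdR.H.map p).hom) :
    evalInt A K HB HdR P M' (HB.H.map i σ) ω' = evalInt A K HB HdR P M (HB.H.map p σ) ω := by
  rw [evalInt_map, h, ← evalInt_map]

end

/-- **Proposition (`PROPQ`, second part).** For each `M ∈ A` the assignment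
`σ ⊗ ω ↦ ω(∫_M(σ))` kills all the relations defining `P^∞(M)`, hence descends to a
well-defined `K`-linear map `eval_∫ : P^∞(M) → ℂ`; and for every morphism
`f : M ⟶ M'` of `Q̃A` (given by a span `(p : N ↠ M, i : N ↪ M')`) the triangle commutes:
`eval_∫ ∘ P^∞(f) = eval_∫` (expressed on generators, `P^∞(f)` sending `σ ⊗ ω` to
`H_B(i)(σ') ⊗ ω'` whenever `H_B(p)(σ') = σ` and `ω' ∘ H_dR(i) = ω ∘ H_dR(p)`). -/
theorem evalInt_descends_and_commutes (P : PeriodPairing A K HB HdR) :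
    (∀ (M : A), PRelDepth A K HB HdR M ⊤ ≤
        LinearMap.ker (evalFreeM A K HB HdR P M)) ∧
    (∀ (M M' : A) (s : QSpan A M M') (σ : HB.H.obj M)
        (ω : Module.Dual ↥K (HdR.H.obj M)) (σ' : HB.H.obj s.N)
        (ω' : Module.Dual ↥K (HdR.H.obj M')),
        HB.H.map s.p σ' = σ → ω'.comp (HdR.H.map s.i).hom = ω.comp (HdR.H.map s.p).hom →
        evalInt A K HB HdR P M' (HB.H.map s.i σ') ω' = evalInt A K HB HdR P M σ ω) :=
  ⟨fun M => pRelDepth_le_ker_evalFreeM P M ⊤, fun _ _ s _ _ σ' _ hσ hω =>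
    hσ ▸ evalInt_map_eq_of_comp_eq P s.p s.i σ' hω⟩
end
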